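/- arXiv:0906.1131 — 3 statements merged into one kernel-verified Lean document; each statement's English description precedes it below -/
import Mathlib

section
/- Let $X_0, X_1, X_2$ be independent random variables with $X_i$ Gamma-distributed with shape parameter $a_i > 0$ (and rate 1). Define $F_1 = X_1/X_0$ and $F_2 = X_2/X_0$. Then the joint density of $(F_1,F_2)$ on $(0,\infty)^2$ is $f(f_1,f_2) = \frac{\Gamma(a_0+a_1+a_2)}{\Gamma(a_0)\Gamma(a_1)\Gamma(a_2)} \cdot \frac{f_1^{a_1-1} f_2^{a_2-1}}{(1+f_1+f_2)^{a_0+a_1+a_2}}$. -/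
/-!
Conditionally on `X₀ = x`, the pair `(F₁, F₂) = x⁻¹ • (X₁, X₂)` has density
`x² g₁(x f₁) g₂(x f₂)` (the Jacobian of the scaling), so averaging over `x` gives the density
`∫ g₀(x) x² g₁(x f₁) g₂(x f₂) dx`. For `f₁, f₂ > 0` the integrand is a constant multiple of the
Gamma density with shape `a₀ + a₁ + a₂` and rate `1 + f₁ + f₂`, and that constant is the claimed
density.
-/

open MeasureTheory ProbabilityTheory Real Module

open scoped ENNReal

section Ratio

variable {E : Type*} [NormedAddCommGroup E] [NormedSpace ℝ E] [FiniteDimensional ℝ E]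
  [MeasurableSpace E] [BorelSpace E] (μ : Measure E) [μ.IsAddHaarMeasure]

theorem lintegral_comp_inv_smul (f : E → ℝ≥0∞) {r : ℝ} (hr : r ≠ 0) :
    ∫⁻ y, f (r⁻¹ • y) ∂μ = ENNReal.ofReal (|r| ^ finrank ℝ E) * ∫⁻ y, f y ∂μ := by
  have hmap : ∫⁻ y, f (r⁻¹ • y) ∂μ = ∫⁻ y, f y ∂(μ.map (r⁻¹ • ·)) :=
    (lintegral_map_equiv f (MeasurableEquiv.smul₀ r⁻¹ (inv_ne_zero hr))).symm
  rw [hmap, Measure.map_addHaar_smul μ (inv_ne_zero hr), lintegral_smul_measure, smul_eq_mul,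
    inv_pow, inv_inv, abs_pow]

theorem map_inv_smul_prod_withDensity {g : ℝ → ℝ≥0∞} {h : E → ℝ≥0∞} (hg : Measurable g)
    (hh : Measurable h) :
    ((volume.withDensity g).prod (μ.withDensity h)).map (fun z ↦ z.1⁻¹ • z.2)
      = μ.withDensity fun y ↦ ∫⁻ x, g x * ENNReal.ofReal (|x| ^ finrank ℝ E) * h (x • y) := by
  have hT : Measurable fun z : ℝ × E ↦ z.1⁻¹ • z.2 := by fun_prop
  have hK : Measurable fun z : ℝ × E ↦
      g z.1 * ENNReal.ofReal (|z.1| ^ finrank ℝ E) * h (z.1 • z.2) := by fun_prop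
  refine Measure.ext_of_lintegral _ fun φ hφ ↦ ?_
  rw [lintegral_map hφ hT, prod_withDensity hg hh,
    lintegral_withDensity_eq_lintegral_mul _ (by fun_prop) (by fun_prop),
    lintegral_prod _ (by fun_prop),
    lintegral_withDensity_eq_lintegral_mul _ hK.lintegral_prod_left' hφ]
  calc ∫⁻ x, ∫⁻ y, ((fun z : ℝ × E ↦ g z.1 * h z.2) * fun z : ℝ × E ↦ φ (z.1⁻¹ • z.2)) (x, y) ∂μ
      = ∫⁻ x, ∫⁻ y, g x * ENNReal.ofReal (|x| ^ finrank ℝ E) * h (x • y) * φ y ∂μ := by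
        refine lintegral_congr_ae ?_
        filter_upwards [Measure.ae_ne volume 0] with x hx
        have hscale := lintegral_comp_inv_smul μ (fun u ↦ g x * h (x • u) * φ u) hx
        simp only [smul_inv_smul₀ hx] at hscale
        simp only [Pi.mul_apply]
        rw [hscale, ← lintegral_const_mul' _ _ ENNReal.ofReal_ne_top]
        exact lintegral_congr fun y ↦ by ring
    _ = ∫⁻ y, ∫⁻ x, g x * ENNReal.ofReal (|x| ^ finrank ℝ E) * h (x • y) * φ y ∂volume ∂μ :=
        lintegral_lintegral_swap (hK.mul (hφ.comp measurable_snd)).aemeasurable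
    _ = _ := lintegral_congr fun y ↦ lintegral_mul_const _ (hK.comp measurable_prodMk_right)

end Ratio

theorem ProbabilityTheory.iIndepFun.map_prodMk_prodMk_eq_prod {Ω β : Type*} [MeasurableSpace Ω]
    [MeasurableSpace β] {μ : Measure Ω} [IsFiniteMeasure μ] {X₀ X₁ X₂ : Ω → β}
    (hm₀ : Measurable X₀) (hm₁ : Measurable X₁) (hm₂ : Measurable X₂)
    (hind : iIndepFun ![X₀, X₁, X₂] μ) :
    μ.map (fun ω ↦ (X₀ ω, X₁ ω, X₂ ω)) = (μ.map X₀).prod ((μ.map X₁).prod (μ.map X₂)) := by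
  have hm : ∀ i, Measurable (![X₀, X₁, X₂] i) := by
    intro i; fin_cases i <;> assumption
  have h₁₂ : IndepFun X₁ X₂ μ := by simpa using hind.indepFun (show (1 : Fin 3) ≠ 2 by decide)
  have h₀₁₂ : IndepFun X₀ (fun ω ↦ (X₁ ω, X₂ ω)) μ := by
    simpa using (hind.indepFun_prodMk hm 1 2 0 (by decide) (by decide)).symm
  rw [(indepFun_iff_map_prod_eq_prod_map_map hm₀.aemeasurable
      (hm₁.prodMk hm₂).aemeasurable).mp h₀₁₂,
    (indepFun_iff_map_prod_eq_prod_map_map hm₁.aemeasurable hm₂.aemeasurable).mp h₁₂]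

/-- The bivariate generalized beta type II (inverted Dirichlet) density. -/
noncomputable def invDirichletPDF (a₀ a₁ a₂ : ℝ) (p : ℝ × ℝ) : ℝ≥0∞ :=
  Set.indicator (Set.Ioi (0:ℝ) ×ˢ Set.Ioi (0:ℝ))
    (fun p ↦ ENNReal.ofReal
      (Gamma (a₀ + a₁ + a₂) / (Gamma a₀ * Gamma a₁ * Gamma a₂) *
        (p.1 ^ (a₁ - 1) * p.2 ^ (a₂ - 1) / (1 + p.1 + p.2) ^ (a₀ + a₁ + a₂)))) p

theorem gammaPDFReal_mul_sq_mul_gammaPDFReal_mul_gammaPDFReal {a₀ a₁ a₂ x y₁ y₂ : ℝ}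
    (ha : 0 < a₀ + a₁ + a₂) (hx : 0 < x) (hy₁ : 0 < y₁) (hy₂ : 0 < y₂) :
    gammaPDFReal a₀ 1 x * x ^ 2 * (gammaPDFReal a₁ 1 (x * y₁) * gammaPDFReal a₂ 1 (x * y₂))
      = Gamma (a₀ + a₁ + a₂) / (Gamma a₀ * Gamma a₁ * Gamma a₂) *
          (y₁ ^ (a₁ - 1) * y₂ ^ (a₂ - 1) / (1 + y₁ + y₂) ^ (a₀ + a₁ + a₂)) *
        gammaPDFReal (a₀ + a₁ + a₂) (1 + y₁ + y₂) x := by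
  have hr : 0 < 1 + y₁ + y₂ := by linarith
  simp only [gammaPDFReal, if_pos hx.le, if_pos (mul_pos hx hy₁).le, if_pos (mul_pos hx hy₂).le,
    one_rpow, mul_rpow hx.le hy₁.le, mul_rpow hx.le hy₂.le]
  have hpow : x ^ (a₀ + a₁ + a₂ - 1) = x ^ (a₀ - 1) * x ^ (a₁ - 1) * x ^ (a₂ - 1) * x ^ 2 := by
    rw [← rpow_natCast, ← rpow_add hx, ← rpow_add hx, ← rpow_add hx]
    congr 1
    push_cast
    ring
  have hexp : exp (-((1 + y₁ + y₂) * x))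
      = exp (-(1 * x)) * (exp (-(1 * (x * y₁))) * exp (-(1 * (x * y₂)))) := by
    rw [← exp_add, ← exp_add]
    ring_nf
  rw [hpow, hexp]
  field_simp [(Gamma_pos_of_pos ha).ne', (rpow_pos_of_pos hr (a₀ + a₁ + a₂)).ne']

-- At `x = 0` or `y.i = 0` the convention `0 ^ 0 = 1` can make the two sides differ.
theorem gammaPDF_mul_sq_mul_gammaPDF_mul_gammaPDF {a₀ a₁ a₂ x : ℝ} {y : ℝ × ℝ}
    (ha₀ : 0 < a₀) (ha₁ : 0 < a₁) (ha₂ : 0 < a₂) (hx : x ≠ 0) (hy₁ : y.1 ≠ 0) (hy₂ : y.2 ≠ 0) :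
    gammaPDF a₀ 1 x * ENNReal.ofReal (|x| ^ 2) *
        (gammaPDF a₁ 1 (x * y.1) * gammaPDF a₂ 1 (x * y.2))
      = invDirichletPDF a₀ a₁ a₂ y * gammaPDF (a₀ + a₁ + a₂) (1 + y.1 + y.2) x := by
  rcases hx.lt_or_gt with hx | hx
  · simp [gammaPDF_of_neg hx]
  rcases hy₁.lt_or_gt with hy₁ | hy₁
  · simp [gammaPDF_of_neg (mul_neg_of_pos_of_neg hx hy₁), invDirichletPDF, hy₁.le]
  rcases hy₂.lt_or_gt with hy₂ | hy₂
  · simp [gammaPDF_of_neg (mul_neg_of_pos_of_neg hx hy₂), invDirichletPDF, hy₂.le]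
  have hy : y ∈ Set.Ioi (0:ℝ) ×ˢ Set.Ioi (0:ℝ) := ⟨hy₁, hy₂⟩
  have hg₀ := gammaPDFReal_nonneg ha₀ one_pos x
  have hg₁ := gammaPDFReal_nonneg ha₁ one_pos (x * y.1)
  have hC : 0 ≤ Gamma (a₀ + a₁ + a₂) / (Gamma a₀ * Gamma a₁ * Gamma a₂) *
      (y.1 ^ (a₁ - 1) * y.2 ^ (a₂ - 1) / (1 + y.1 + y.2) ^ (a₀ + a₁ + a₂)) := by
    have := Gamma_pos_of_pos ha₀
    have := Gamma_pos_of_pos ha₁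
    have := Gamma_pos_of_pos ha₂
    have := Gamma_pos_of_pos (add_pos (add_pos ha₀ ha₁) ha₂)
    positivity
  rw [invDirichletPDF, Set.indicator_of_mem hy, gammaPDF, gammaPDF, gammaPDF, gammaPDF,
    abs_of_pos hx, ← ENNReal.ofReal_mul hg₀, ← ENNReal.ofReal_mul hg₁,
    ← ENNReal.ofReal_mul (by positivity), ← ENNReal.ofReal_mul hC,
    gammaPDFReal_mul_sq_mul_gammaPDFReal_mul_gammaPDFReal (by linarith) hx hy₁ hy₂]

theorem lintegral_gammaPDF_ratio_eq_invDirichletPDF {a₀ a₁ a₂ : ℝ}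
    (ha₀ : 0 < a₀) (ha₁ : 0 < a₁) (ha₂ : 0 < a₂) :
    ∀ᵐ y : ℝ × ℝ, ∫⁻ x, gammaPDF a₀ 1 x * ENNReal.ofReal (|x| ^ 2) *
        (gammaPDF a₁ 1 (x * y.1) * gammaPDF a₂ 1 (x * y.2)) = invDirichletPDF a₀ a₁ a₂ y := by
  have hfst : ∀ᵐ y : ℝ × ℝ, y.1 ≠ 0 :=
    Measure.quasiMeasurePreserving_fst.ae (Measure.ae_ne volume 0)
  have hsnd : ∀ᵐ y : ℝ × ℝ, y.2 ≠ 0 :=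
    Measure.quasiMeasurePreserving_snd.ae (Measure.ae_ne volume 0)
  filter_upwards [hfst, hsnd] with y hy₁ hy₂
  have hpdf : Measurable (gammaPDF (a₀ + a₁ + a₂) (1 + y.1 + y.2)) :=
    (measurable_gammaPDFReal _ _).ennreal_ofReal
  calc _ = ∫⁻ x, invDirichletPDF a₀ a₁ a₂ y * gammaPDF (a₀ + a₁ + a₂) (1 + y.1 + y.2) x := by
        refine lintegral_congr_ae ?_
        filter_upwards [Measure.ae_ne volume 0] with x hx
        exact gammaPDF_mul_sq_mul_gammaPDF_mul_gammaPDF ha₀ ha₁ ha₂ hx hy₁ hy₂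
    _ = invDirichletPDF a₀ a₁ a₂ y := by
        rw [lintegral_const_mul _ hpdf]
        by_cases hy : y ∈ Set.Ioi (0:ℝ) ×ˢ Set.Ioi (0:ℝ)
        · rw [lintegral_gammaPDF_eq_one (by linarith)
            (by linarith [Set.mem_Ioi.1 hy.1, Set.mem_Ioi.1 hy.2]), mul_one]
        · simp [invDirichletPDF, hy]

theorem bivariate_gen_beta_II_density
    {Ω : Type*} [MeasureSpace Ω] [IsProbabilityMeasure (ℙ : Measure Ω)]
    (a₀ a₁ a₂ : ℝ) (ha₀ : 0 < a₀) (ha₁ : 0 < a₁) (ha₂ : 0 < a₂)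
    (X₀ X₁ X₂ : Ω → ℝ) (hm₀ : Measurable X₀) (hm₁ : Measurable X₁) (hm₂ : Measurable X₂)
    (hind : iIndepFun ![X₀, X₁, X₂] ℙ)
    (h₀ : Measure.map X₀ ℙ = gammaMeasure a₀ 1)
    (h₁ : Measure.map X₁ ℙ = gammaMeasure a₁ 1)
    (h₂ : Measure.map X₂ ℙ = gammaMeasure a₂ 1) :
    Measure.map (fun ω => (X₁ ω / X₀ ω, X₂ ω / X₀ ω)) ℙ
      = (volume : Measure (ℝ × ℝ)).withDensity (fun p =>
          Set.indicator (Set.Ioi (0:ℝ) ×ˢ Set.Ioi (0:ℝ))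
            (fun p => ENNReal.ofReal
              (Gamma (a₀ + a₁ + a₂) / (Gamma a₀ * Gamma a₁ * Gamma a₂) *
                (p.1 ^ (a₁ - 1) * p.2 ^ (a₂ - 1) /
                  (1 + p.1 + p.2) ^ (a₀ + a₁ + a₂)))) p) := by
  change _ = volume.withDensity (invDirichletPDF a₀ a₁ a₂)
  have hpdf (a : ℝ) : Measurable (gammaPDF a 1) := (measurable_gammaPDFReal a 1).ennreal_ofReal
  have hlaw : Measure.map (fun ω ↦ (X₀ ω, X₁ ω, X₂ ω)) ℙ
      = (volume.withDensity (gammaPDF a₀ 1)).prod ((volume : Measure (ℝ × ℝ)).withDensity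
          fun q ↦ gammaPDF a₁ 1 q.1 * gammaPDF a₂ 1 q.2) := by
    rw [hind.map_prodMk_prodMk_eq_prod hm₀ hm₁ hm₂, h₀, h₁, h₂, gammaMeasure, gammaMeasure,
      gammaMeasure, prod_withDensity (hpdf a₁) (hpdf a₂), Measure.volume_eq_prod]
  have hratio : (fun ω ↦ (X₁ ω / X₀ ω, X₂ ω / X₀ ω))
      = (fun z : ℝ × ℝ × ℝ ↦ z.1⁻¹ • z.2) ∘ fun ω ↦ (X₀ ω, X₁ ω, X₂ ω) := by
    ext ω <;> simp [div_eq_inv_mul]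
  rw [hratio, ← Measure.map_map (by fun_prop) (by fun_prop), hlaw,
    map_inv_smul_prod_withDensity _ (hpdf a₀) (by fun_prop)]
  refine withDensity_congr_ae ?_
  filter_upwards [lintegral_gammaPDF_ratio_eq_invDirichletPDF ha₀ ha₁ ha₂] with y hy
  simpa using hy
end

section
/- For real parameters $a, b, c > 0$, the integral $\int_0^1 \int_0^1 \frac{u_1^{a-1} u_2^{b-1} (1-u_1)^{b+c-1} (1-u_2)^{a+c-1}}{(1-u_1 u_2)^{a+b+c}} \, du_1 \, du_2 = \frac{\Gamma(a)\Gamma(b)\Gamma(c)}{\Gamma(a+b+c)}$. -/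
open MeasureTheory Real

/-! For fixed `u₁`, the substitution `u₂ = u / (1 - u₁ + u₁ u)` (Euler's transformation of the
beta integral) turns the inner integral into `B(b, a + c) u₁^(a-1) (1 - u₁)^(c-1)`, and the outer
integral then gives `B(b, a + c) B(a, c) = Γ(a) Γ(b) Γ(c) / Γ(a + b + c)`. -/

theorem integral_Ioo_rpow_mul_one_sub_rpow {p q : ℝ} (hp : 0 < p) (hq : 0 < q) :
    ∫ t in Set.Ioo (0 : ℝ) 1, t ^ (p - 1) * (1 - t) ^ (q - 1)
      = Gamma p * Gamma q / Gamma (p + q) := by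
  have hcast : ∀ t ∈ Set.Ioo (0 : ℝ) 1,
      (t : ℂ) ^ ((p : ℂ) - 1) * (1 - (t : ℂ)) ^ ((q : ℂ) - 1)
        = ((t ^ (p - 1) * (1 - t) ^ (q - 1) : ℝ) : ℂ) := fun t ht => by
    rw [Complex.ofReal_mul, Complex.ofReal_cpow ht.1.le, Complex.ofReal_cpow (sub_pos.2 ht.2).le]
    push_cast
    rfl
  have hbeta : Complex.betaIntegral p q
      = ((∫ t in Set.Ioo (0 : ℝ) 1, t ^ (p - 1) * (1 - t) ^ (q - 1) : ℝ) : ℂ) := by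
    rw [Complex.betaIntegral, intervalIntegral.integral_of_le zero_le_one,
      integral_Ioc_eq_integral_Ioo, setIntegral_congr_fun measurableSet_Ioo hcast]
    exact integral_ofReal
  have hGamma := Complex.Gamma_mul_Gamma_eq_betaIntegral
    (s := p) (t := q) (by simpa using hp) (by simpa using hq)
  rw [hbeta, ← Complex.ofReal_add, Complex.Gamma_ofReal, Complex.Gamma_ofReal,
    Complex.Gamma_ofReal] at hGamma
  rw [eq_div_iff (Gamma_pos_of_pos (add_pos hp hq)).ne', mul_comm]
  exact_mod_cast hGamma.symm

noncomputable def eulerSubst (x u : ℝ) : ℝ := u / (1 - x + x * u)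

section eulerSubst

variable {x u : ℝ}

theorem eulerSubst_denom_pos (hx : x < 1) (hu : u ∈ Set.Ioo (0 : ℝ) 1) :
    0 < 1 - x + x * u := by
  nlinarith [hu.1, hu.2]

theorem one_sub_eulerSubst (hD : 0 < 1 - x + x * u) :
    1 - eulerSubst x u = (1 - x) * (1 - u) / (1 - x + x * u) := by
  rw [eulerSubst, one_sub_div hD.ne']
  ring

theorem one_sub_mul_eulerSubst (hD : 0 < 1 - x + x * u) :
    1 - x * eulerSubst x u = (1 - x) / (1 - x + x * u) := by
  rw [eulerSubst, mul_div_assoc', one_sub_div hD.ne']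
  ring

theorem hasDerivAt_eulerSubst (hD : 0 < 1 - x + x * u) :
    HasDerivAt (eulerSubst x) ((1 - x) / (1 - x + x * u) ^ 2) u := by
  have hden : HasDerivAt (fun u => 1 - x + x * u) x u := by
    simpa using ((hasDerivAt_id u).const_mul x).const_add (1 - x)
  exact ((hasDerivAt_id' u).div hden hD.ne').congr_deriv (by ring)

theorem injOn_eulerSubst (hx : x < 1) : Set.InjOn (eulerSubst x) (Set.Ioo 0 1) := by
  intro u hu v hv huv
  have hDu := eulerSubst_denom_pos hx hu
  have hDv := eulerSubst_denom_pos hx hv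
  rw [eulerSubst, eulerSubst, div_eq_div_iff hDu.ne' hDv.ne'] at huv
  nlinarith

theorem eulerSubst_image_Ioo (hx : x < 1) : eulerSubst x '' Set.Ioo 0 1 = Set.Ioo 0 1 := by
  ext t
  constructor
  · rintro ⟨u, hu, rfl⟩
    have hD := eulerSubst_denom_pos hx hu
    exact ⟨div_pos hu.1 hD, (div_lt_one hD).2 (by nlinarith [hu.2])⟩
  · intro ht
    have hxt : 0 < 1 - x * t := by nlinarith [ht.1, ht.2]
    have h1x : 0 < 1 - x := sub_pos.2 hx
    refine ⟨(1 - x) * t / (1 - x * t),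
      ⟨by have := ht.1; positivity, (div_lt_one hxt).2 (by nlinarith [ht.2])⟩, ?_⟩
    rw [eulerSubst]
    field_simp
    ring

theorem abs_deriv_smul_eulerSubst_integrand (p q : ℝ) (hx : x < 1) (hu : u ∈ Set.Ioo (0 : ℝ) 1) :
    |(1 - x) / (1 - x + x * u) ^ 2| • (eulerSubst x u ^ (p - 1) * (1 - eulerSubst x u) ^ (q - 1)
      / (1 - x * eulerSubst x u) ^ (p + q))
      = (1 - x) ^ (-p) * (u ^ (p - 1) * (1 - u) ^ (q - 1)) := by
  have hD := eulerSubst_denom_pos hx hu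
  have h1x : 0 < 1 - x := sub_pos.2 hx
  have h1u : 0 < 1 - u := sub_pos.2 hu.2
  rw [one_sub_eulerSubst hD, one_sub_mul_eulerSubst hD, eulerSubst, smul_eq_mul,
    abs_of_pos (by positivity), div_rpow hu.1.le hD.le, div_rpow (by positivity) hD.le,
    div_rpow h1x.le hD.le, mul_rpow h1x.le h1u.le, rpow_neg h1x.le, rpow_sub_one hD.ne',
    rpow_sub_one hD.ne', rpow_sub_one h1x.ne', rpow_add hD, rpow_add h1x]
  field_simp

/-- Euler's transformation of the beta integral. -/
theorem integral_Ioo_div_one_sub_mul_rpow (p q : ℝ) (hx : x < 1) :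
    ∫ t in Set.Ioo (0 : ℝ) 1, t ^ (p - 1) * (1 - t) ^ (q - 1) / (1 - x * t) ^ (p + q)
      = (1 - x) ^ (-p) * ∫ t in Set.Ioo (0 : ℝ) 1, t ^ (p - 1) * (1 - t) ^ (q - 1) := by
  rw [← integral_const_mul]
  conv_lhs => rw [← eulerSubst_image_Ioo hx]
  rw [integral_image_eq_integral_abs_deriv_smul measurableSet_Ioo
    (fun u hu => (hasDerivAt_eulerSubst (eulerSubst_denom_pos hx hu)).hasDerivWithinAt)
    (injOn_eulerSubst hx)]
  exact setIntegral_congr_fun measurableSet_Ioo fun u hu =>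
    abs_deriv_smul_eulerSubst_integrand p q hx hu

end eulerSubst

theorem bivariate_gen_beta_I_normalization (a b c : ℝ) (ha : 0 < a) (hb : 0 < b) (hc : 0 < c) :
    ∫ u₁ in Set.Ioo (0:ℝ) 1, ∫ u₂ in Set.Ioo (0:ℝ) 1,
      u₁ ^ (a - 1) * u₂ ^ (b - 1) * (1 - u₁) ^ (b + c - 1) * (1 - u₂) ^ (a + c - 1) /
        (1 - u₁ * u₂) ^ (a + b + c)
    = Gamma a * Gamma b * Gamma c / Gamma (a + b + c) := by
  have hinner : ∀ u₁ ∈ Set.Ioo (0:ℝ) 1,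
      (∫ u₂ in Set.Ioo (0:ℝ) 1,
        u₁ ^ (a - 1) * u₂ ^ (b - 1) * (1 - u₁) ^ (b + c - 1) * (1 - u₂) ^ (a + c - 1) /
          (1 - u₁ * u₂) ^ (a + b + c))
        = Gamma b * Gamma (a + c) / Gamma (a + b + c) * (u₁ ^ (a - 1) * (1 - u₁) ^ (c - 1)) := by
    intro u₁ hu₁
    have h1u₁ : 0 < 1 - u₁ := sub_pos.2 hu₁.2
    calc _ = ∫ u₂ in Set.Ioo (0:ℝ) 1, u₁ ^ (a - 1) * (1 - u₁) ^ (b + c - 1) *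
            (u₂ ^ (b - 1) * (1 - u₂) ^ (a + c - 1) / (1 - u₁ * u₂) ^ (b + (a + c))) := by
          refine integral_congr_ae (ae_of_all _ fun u₂ => ?_)
          rw [show b + (a + c) = a + b + c by ring]
          ring
      _ = u₁ ^ (a - 1) * ((1 - u₁) ^ (b + c - 1) * (1 - u₁) ^ (-b)) *
            (Gamma b * Gamma (a + c) / Gamma (b + (a + c))) := by
          rw [integral_const_mul, integral_Ioo_div_one_sub_mul_rpow _ _ hu₁.2,
            integral_Ioo_rpow_mul_one_sub_rpow hb (by positivity)]
          ring
      _ = _ := by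
          rw [← rpow_add h1u₁, show b + c - 1 + -b = c - 1 by ring,
            show b + (a + c) = a + b + c by ring]
          ring
  rw [setIntegral_congr_fun measurableSet_Ioo hinner, integral_const_mul,
    integral_Ioo_rpow_mul_one_sub_rpow ha hc]
  have hac : Gamma (a + c) ≠ 0 := (Gamma_pos_of_pos (by positivity)).ne'
  field_simp
end

section
/- For real $a, b, c > 0$ and $0 < x < 1$: $\int_0^x \int_0^x \frac{u_1^{a-1} u_2^{b-1} (1-u_1)^{b+c-1} (1-u_2)^{a+c-1}}{(1-u_1 u_2)^{a+b+c}} du_1 du_2 \le \frac{\Gamma(a)\Gamma(b)\Gamma(c)}{\Gamma(a+b+c)}$, with equality in the limit $x \to 1$. -/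
/-!
The inner integral is an Euler-type beta integral: the Möbius substitution
`t = s / (1 - z + z s)` of `(0, 1)` gives
`∫₀¹ t^(p-1) (1-t)^(q-1) (1 - z t)^(-(p+q)) dt = B(p, q) (1 - z)^(-p)` for `z < 1`.
With `z = u₁`, `p = b`, `q = a + c` this leaves `B(b, a + c) u₁^(a-1) (1-u₁)^(c-1)`, whose
integral is `B(b, a + c) B(a, c) = Γ(a) Γ(b) Γ(c) / Γ(a + b + c)`. The integrand is nonnegative
and integrable on the unit square, so its integrals over the squares `(0, x)²` are bounded by
the integral over `(0, 1)²` and converge to it as `x → 1⁻`.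
-/

open MeasureTheory Real Filter Set ProbabilityTheory Topology

theorem ae_nonneg_rpow_mul_one_sub_rpow (α β : ℝ) :
    0 ≤ᵐ[volume.restrict (Ioo 0 1)] fun x : ℝ ↦ x ^ (α - 1) * (1 - x) ^ (β - 1) :=
  ae_restrict_of_forall_mem measurableSet_Ioo fun x hx ↦ by
    have := hx.1
    have : 0 < 1 - x := by linarith [hx.2]
    positivity

theorem lintegral_ofReal_rpow_mul_one_sub_rpow {α β : ℝ} (hα : 0 < α) (hβ : 0 < β) :
    ∫⁻ x in Ioo 0 1, ENNReal.ofReal (x ^ (α - 1) * (1 - x) ^ (β - 1)) =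
      ENNReal.ofReal (beta α β) := by
  have hB := beta_pos hα hβ
  have h := lintegral_betaPDF_eq_one hα hβ
  simp_rw [lintegral_betaPDF, mul_assoc, ENNReal.ofReal_mul (one_div_pos.2 hB).le] at h
  rw [lintegral_const_mul _ (by fun_prop), one_div, ENNReal.ofReal_inv_of_pos hB] at h
  rw [ENNReal.eq_inv_of_mul_eq_one_left ((mul_comm _ _).trans h), inv_inv]

theorem integrableOn_rpow_mul_one_sub_rpow {α β : ℝ} (hα : 0 < α) (hβ : 0 < β) :
    IntegrableOn (fun x : ℝ ↦ x ^ (α - 1) * (1 - x) ^ (β - 1)) (Ioo 0 1) := by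
  refine ⟨by fun_prop, (hasFiniteIntegral_iff_ofReal
    (ae_nonneg_rpow_mul_one_sub_rpow α β)).2 ?_⟩
  rw [lintegral_ofReal_rpow_mul_one_sub_rpow hα hβ]
  exact ENNReal.ofReal_lt_top

theorem integral_rpow_mul_one_sub_rpow {α β : ℝ} (hα : 0 < α) (hβ : 0 < β) :
    ∫ x in Ioo 0 1, x ^ (α - 1) * (1 - x) ^ (β - 1) = beta α β := by
  rw [integral_eq_lintegral_of_nonneg_ae (ae_nonneg_rpow_mul_one_sub_rpow α β)
    (by fun_prop), lintegral_ofReal_rpow_mul_one_sub_rpow hα hβ,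
    ENNReal.toReal_ofReal (beta_pos hα hβ).le]

noncomputable def mobius (z s : ℝ) : ℝ := s / (1 - z + z * s)

section mobius

variable {z : ℝ} (hz : z < 1)
include hz

theorem mobius_denom_pos {s : ℝ} (hs : s ∈ Ioo (0 : ℝ) 1) : 0 < 1 - z + z * s := by
  nlinarith [hs.1, hs.2]

theorem hasDerivAt_mobius {s : ℝ} (hs : s ∈ Ioo (0 : ℝ) 1) :
    HasDerivAt (mobius z) ((1 - z) / (1 - z + z * s) ^ 2) s := by
  have h := (hasDerivAt_id s).div (((hasDerivAt_id s).const_mul z).const_add (1 - z))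
    (mobius_denom_pos hz hs).ne'
  exact h.congr_deriv (by simp only [id]; ring)

theorem injOn_mobius : InjOn (mobius z) (Ioo 0 1) := by
  intro s₁ hs₁ s₂ hs₂ h
  rw [mobius, mobius, div_eq_div_iff (mobius_denom_pos hz hs₁).ne'
    (mobius_denom_pos hz hs₂).ne'] at h
  nlinarith

theorem mobius_image_Ioo : mobius z '' Ioo 0 1 = Ioo 0 1 := by
  ext t
  constructor
  · rintro ⟨s, hs, rfl⟩
    have hD := mobius_denom_pos hz hs
    exact ⟨div_pos hs.1 hD, (div_lt_one hD).2 (by nlinarith [hs.1, hs.2])⟩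
  · intro ht
    have hzt : 0 < 1 - z * t := by nlinarith [ht.1, ht.2]
    refine ⟨t * (1 - z) / (1 - z * t), ⟨div_pos (by nlinarith [ht.1]) hzt, ?_⟩, ?_⟩
    · rw [div_lt_one hzt]; nlinarith [ht.2]
    · have h1z : 1 - z ≠ 0 := by linarith
      have hD : 1 - z + z * (t * (1 - z) / (1 - z * t)) = (1 - z) / (1 - z * t) := by
        field_simp; ring
      rw [mobius, hD, div_div_div_cancel_right₀ hzt.ne', mul_div_assoc, div_self h1z, mul_one]

theorem integrableOn_comp_mobius_iff (g : ℝ → ℝ) :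
    IntegrableOn g (Ioo 0 1) ↔
      IntegrableOn (fun s ↦ |(1 - z) / (1 - z + z * s) ^ 2| * g (mobius z s)) (Ioo 0 1) := by
  conv_lhs => rw [← mobius_image_Ioo hz]
  exact integrableOn_image_iff_integrableOn_abs_deriv_smul measurableSet_Ioo
    (fun s hs ↦ (hasDerivAt_mobius hz hs).hasDerivWithinAt) (injOn_mobius hz) g

theorem integral_comp_mobius (g : ℝ → ℝ) :
    ∫ t in Ioo 0 1, g t = ∫ s in Ioo 0 1, |(1 - z) / (1 - z + z * s) ^ 2| * g (mobius z s) := by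
  conv_lhs => rw [← mobius_image_Ioo hz]
  exact integral_image_eq_integral_abs_deriv_smul measurableSet_Ioo
    (fun s hs ↦ (hasDerivAt_mobius hz hs).hasDerivWithinAt) (injOn_mobius hz) g

theorem abs_deriv_mul_comp_mobius (p q : ℝ) {s : ℝ} (hs : s ∈ Ioo (0 : ℝ) 1) :
    |(1 - z) / (1 - z + z * s) ^ 2| *
        (mobius z s ^ (p - 1) * (1 - mobius z s) ^ (q - 1) / (1 - z * mobius z s) ^ (p + q)) =
      ((1 - z) ^ p)⁻¹ * (s ^ (p - 1) * (1 - s) ^ (q - 1)) := by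
  obtain ⟨hs0, hs1⟩ := hs
  have h1z : 0 < 1 - z := by linarith
  have h1s : 0 < 1 - s := by linarith
  have hD : 0 < 1 - z + z * s := mobius_denom_pos hz ⟨hs0, hs1⟩
  have h_one_sub : 1 - mobius z s = (1 - z) * (1 - s) / (1 - z + z * s) := by
    rw [mobius, eq_div_iff hD.ne', sub_mul, div_mul_cancel₀ _ hD.ne']; ring
  have h_one_sub_mul : 1 - z * mobius z s = (1 - z) / (1 - z + z * s) := by
    rw [mobius, eq_div_iff hD.ne', sub_mul, mul_div_assoc', div_mul_cancel₀ _ hD.ne']; ring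
  rw [h_one_sub, h_one_sub_mul, mobius]
  set D := 1 - z + z * s
  have hD_pow : D ^ (p + q) = D ^ 2 * (D ^ (p - 1) * D ^ (q - 1)) := by
    rw [← rpow_natCast, ← rpow_add hD, ← rpow_add hD]
    congr 1
    push_cast
    ring
  have h1z_pow : (1 - z) ^ (p + q) = (1 - z) * ((1 - z) ^ (q - 1) * (1 - z) ^ p) := by
    rw [show p + q = 1 + (q - 1 + p) by ring, rpow_add h1z, rpow_add h1z, rpow_one]
  rw [abs_of_pos (by positivity), div_rpow hs0.le hD.le, div_rpow (by positivity) hD.le,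
    div_rpow h1z.le hD.le, mul_rpow h1z.le h1s.le, hD_pow, h1z_pow]
  have := rpow_pos_of_pos hD (p - 1)
  have := rpow_pos_of_pos hD (q - 1)
  have := rpow_pos_of_pos h1z (q - 1)
  have := rpow_pos_of_pos h1z p
  field_simp

end mobius

section euler

variable {p q z : ℝ} (hp : 0 < p) (hq : 0 < q) (hz : z < 1)
include hp hq hz

theorem integrableOn_rpow_mul_one_sub_rpow_div_rpow :
    IntegrableOn (fun t : ℝ ↦ t ^ (p - 1) * (1 - t) ^ (q - 1) / (1 - z * t) ^ (p + q))
      (Ioo 0 1) := by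
  rw [integrableOn_comp_mobius_iff hz]
  exact IntegrableOn.congr_fun ((integrableOn_rpow_mul_one_sub_rpow hp hq).const_mul _)
    (fun s hs ↦ (abs_deriv_mul_comp_mobius hz p q hs).symm) measurableSet_Ioo

theorem integral_rpow_mul_one_sub_rpow_div_rpow :
    ∫ t in Ioo 0 1, t ^ (p - 1) * (1 - t) ^ (q - 1) / (1 - z * t) ^ (p + q) =
      beta p q / (1 - z) ^ p := by
  rw [integral_comp_mobius hz, setIntegral_congr_fun measurableSet_Ioo
    (fun s hs ↦ abs_deriv_mul_comp_mobius hz p q hs), integral_const_mul,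
    integral_rpow_mul_one_sub_rpow hp hq, inv_mul_eq_div]

end euler

noncomputable def bivariateBetaDensity (a b c : ℝ) (u : ℝ × ℝ) : ℝ :=
  u.1 ^ (a - 1) * u.2 ^ (b - 1) * (1 - u.1) ^ (b + c - 1) * (1 - u.2) ^ (a + c - 1) /
    (1 - u.1 * u.2) ^ (a + b + c)

section bivariateBetaDensity

variable {a b c : ℝ}

theorem measurable_bivariateBetaDensity : Measurable (bivariateBetaDensity a b c) := by
  unfold bivariateBetaDensity
  fun_prop

theorem bivariateBetaDensity_nonneg {u : ℝ × ℝ} (hu : u ∈ Ioo (0 : ℝ) 1 ×ˢ Ioo (0 : ℝ) 1) :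
    0 ≤ bivariateBetaDensity a b c u := by
  obtain ⟨⟨hu₁0, hu₁1⟩, hu₂0, hu₂1⟩ := hu
  have : 0 < 1 - u.1 := by linarith
  have : 0 < 1 - u.2 := by linarith
  have : 0 < 1 - u.1 * u.2 := by nlinarith
  unfold bivariateBetaDensity
  positivity

theorem bivariateBetaDensity_eq_mul (u₁ u₂ : ℝ) :
    bivariateBetaDensity a b c (u₁, u₂) = u₁ ^ (a - 1) * (1 - u₁) ^ (b + c - 1) *
      (u₂ ^ (b - 1) * (1 - u₂) ^ (a + c - 1) / (1 - u₁ * u₂) ^ (b + (a + c))) := by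
  rw [bivariateBetaDensity, show b + (a + c) = a + b + c by ring]
  ring

theorem integral_bivariateBetaDensity_section (ha : 0 < a) (hb : 0 < b) (hc : 0 < c) {u₁ : ℝ}
    (hu₁ : u₁ ∈ Ioo (0 : ℝ) 1) :
    ∫ u₂ in Ioo 0 1, bivariateBetaDensity a b c (u₁, u₂) =
      beta b (a + c) * (u₁ ^ (a - 1) * (1 - u₁) ^ (c - 1)) := by
  have h1u : 0 < 1 - u₁ := by linarith [hu₁.2]
  simp_rw [bivariateBetaDensity_eq_mul]
  rw [integral_const_mul, integral_rpow_mul_one_sub_rpow_div_rpow hb (add_pos ha hc) hu₁.2,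
    show b + c - 1 = (c - 1) + b by ring, rpow_add h1u]
  have := rpow_pos_of_pos h1u b
  field_simp

theorem integrableOn_bivariateBetaDensity (ha : 0 < a) (hb : 0 < b) (hc : 0 < c) :
    IntegrableOn (bivariateBetaDensity a b c) (Ioo 0 1 ×ˢ Ioo 0 1) := by
  rw [IntegrableOn, Measure.volume_eq_prod, ← Measure.prod_restrict]
  refine (integrable_prod_iff measurable_bivariateBetaDensity.aestronglyMeasurable).2 ⟨?_, ?_⟩
  · refine ae_restrict_of_forall_mem measurableSet_Ioo fun u₁ hu₁ ↦ ?_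
    simp_rw [bivariateBetaDensity_eq_mul]
    exact ((integrableOn_rpow_mul_one_sub_rpow_div_rpow hb (add_pos ha hc) hu₁.2).const_mul _)
  · refine IntegrableOn.congr_fun ((integrableOn_rpow_mul_one_sub_rpow ha hc).const_mul
      (beta b (a + c))) (fun u₁ hu₁ ↦ ?_) measurableSet_Ioo
    rw [← integral_bivariateBetaDensity_section ha hb hc hu₁]
    exact setIntegral_congr_fun measurableSet_Ioo fun u₂ hu₂ ↦
      (Real.norm_of_nonneg (bivariateBetaDensity_nonneg ⟨hu₁, hu₂⟩)).symm

theorem beta_add_mul_beta (ha : 0 < a) (hb : 0 < b) (hc : 0 < c) :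
    beta b (a + c) * beta a c = Gamma a * Gamma b * Gamma c / Gamma (a + b + c) := by
  have := (Gamma_pos_of_pos (add_pos ha hc)).ne'
  rw [beta, beta, show b + (a + c) = a + b + c by ring]
  field_simp

theorem setIntegral_bivariateBetaDensity (ha : 0 < a) (hb : 0 < b) (hc : 0 < c) :
    ∫ u in Ioo 0 1 ×ˢ Ioo 0 1, bivariateBetaDensity a b c u =
      Gamma a * Gamma b * Gamma c / Gamma (a + b + c) := by
  rw [Measure.volume_eq_prod, setIntegral_prod _ (integrableOn_bivariateBetaDensity ha hb hc),
    setIntegral_congr_fun measurableSet_Ioo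
      (fun u₁ hu₁ ↦ integral_bivariateBetaDensity_section ha hb hc hu₁),
    integral_const_mul, integral_rpow_mul_one_sub_rpow ha hc, beta_add_mul_beta ha hb hc]

end bivariateBetaDensity

theorem tendsto_setIntegral_Ioo_prod_Ioo_nhdsLT {E : Type*} [NormedAddCommGroup E]
    [NormedSpace ℝ E] {μ : Measure (ℝ × ℝ)} {f : ℝ × ℝ → E} {a b : ℝ}
    (hf : IntegrableOn f (Ioo a b ×ˢ Ioo a b) μ) :
    Tendsto (fun x ↦ ∫ u in Ioo a x ×ˢ Ioo a x, f u ∂μ) (𝓝[<] b)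
      (𝓝 (∫ u in Ioo a b ×ˢ Ioo a b, f u ∂μ)) := by
  have hunion : ⋃ x : Iio b, Ioo a (x : ℝ) ×ˢ Ioo a (x : ℝ) = Ioo a b ×ˢ Ioo a b := by
    refine Subset.antisymm (iUnion_subset fun x ↦ ?_) ?_
    · exact prod_mono (Ioo_subset_Ioo_right x.2.le) (Ioo_subset_Ioo_right x.2.le)
    · rintro ⟨u, v⟩ ⟨hu, hv⟩
      obtain ⟨x, hx, hxb⟩ := exists_between (max_lt hu.2 hv.2)
      exact mem_iUnion.2 ⟨⟨x, hxb⟩, ⟨hu.1, (le_max_left u v).trans_lt hx⟩,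
        ⟨hv.1, (le_max_right u v).trans_lt hx⟩⟩
  have hmono : Monotone fun x : Iio b ↦ Ioo a (x : ℝ) ×ˢ Ioo a (x : ℝ) := fun x y hxy ↦
    prod_mono (Ioo_subset_Ioo_right hxy) (Ioo_subset_Ioo_right hxy)
  rw [← tendsto_comp_coe_Iio_atTop, ← hunion]
  rw [← hunion] at hf
  exact tendsto_setIntegral_of_monotone (fun _ ↦ measurableSet_Ioo.prod measurableSet_Ioo)
    hmono hf

theorem bivariate_gen_beta_I_cdf_le_and_tendsto (a b c : ℝ)
    (ha : 0 < a) (hb : 0 < b) (hc : 0 < c) :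
    (∀ x : ℝ, 0 < x → x < 1 →
      (∫ u₁ in Set.Ioo (0:ℝ) x, ∫ u₂ in Set.Ioo (0:ℝ) x,
        u₁ ^ (a - 1) * u₂ ^ (b - 1) * (1 - u₁) ^ (b + c - 1) * (1 - u₂) ^ (a + c - 1) /
          (1 - u₁ * u₂) ^ (a + b + c))
        ≤ Gamma a * Gamma b * Gamma c / Gamma (a + b + c)) ∧
    Tendsto (fun x : ℝ =>
      ∫ u₁ in Set.Ioo (0:ℝ) x, ∫ u₂ in Set.Ioo (0:ℝ) x,
        u₁ ^ (a - 1) * u₂ ^ (b - 1) * (1 - u₁) ^ (b + c - 1) * (1 - u₂) ^ (a + c - 1) /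
          (1 - u₁ * u₂) ^ (a + b + c))
      (nhdsWithin 1 (Set.Iio 1))
      (nhds (Gamma a * Gamma b * Gamma c / Gamma (a + b + c))) := by
  have hint := integrableOn_bivariateBetaDensity ha hb hc
  have hsquare_subset {x : ℝ} (hx : x ≤ 1) : Ioo 0 x ×ˢ Ioo 0 x ⊆ Ioo (0 : ℝ) 1 ×ˢ Ioo 0 1 :=
    prod_mono (Ioo_subset_Ioo_right hx) (Ioo_subset_Ioo_right hx)
  have hiterated {x : ℝ} (hx : x ≤ 1) :
      ∫ u in Ioo 0 x ×ˢ Ioo 0 x, bivariateBetaDensity a b c u =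
        ∫ u₁ in Ioo 0 x, ∫ u₂ in Ioo 0 x, bivariateBetaDensity a b c (u₁, u₂) := by
    rw [Measure.volume_eq_prod]
    exact setIntegral_prod _ (hint.mono_set (hsquare_subset hx))
  rw [← setIntegral_bivariateBetaDensity ha hb hc]
  refine ⟨fun x _ hx ↦ ?_, ?_⟩
  · refine (hiterated hx.le).symm.trans_le (setIntegral_mono_set hint
      (ae_restrict_of_forall_mem (measurableSet_Ioo.prod measurableSet_Ioo)
        fun u hu ↦ bivariateBetaDensity_nonneg hu)
      (hsquare_subset hx.le).eventuallyLE)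
  · exact (tendsto_setIntegral_Ioo_prod_Ioo_nhdsLT hint).congr'
      (eventually_nhdsWithin_of_forall fun x hx ↦ hiterated (le_of_lt hx))
end
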